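/- Let ϑₙ = π(1 − 2⁻ⁿ), ζₙ = e^{iϑₙ}, uₙ(z) = Re((ζₙ + z)/(ζₙ − z)), and let γ = (γₙ) ∈ ℓ¹ with γ ≠ 0, and u = Σₙ γₙ uₙ. Then u is not the Poisson integral of any integrable boundary function: there is no Lebesgue-integrable f : [0, 2π) → ℝ such that u(z) = (1/2π) ∫₀^{2π} ((1 − |z|²)/|e^{it} − z|²) f(t) dt for all z ∈ 𝔻. -/

import Mathlib

/-!
Approach `ζₙ` radially. For `|w| = 1` the quantity `(1 - r) P(rζ, w)` is bounded by `2` and tends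
to `2` if `w = ζ` and to `0` otherwise, so dominated convergence gives `(1 - r) u(rζₙ) → 2γₙ`.
For the Poisson integral of an `L¹` function the same limit is `0`, since `e^{it} = ζₙ` only on a
null set of `t`. Hence every `γₙ` vanishes.
-/

open Complex MeasureTheory Filter Set

noncomputable section

/-- `ϑₙ = π(1 - 2⁻⁽ⁿ⁺¹⁾)` (indexing from `n = 0`, so this is the paper's `ϑ_{n+1}`). -/
def theta (n : ℕ) : ℝ := Real.pi * (1 - (1 / 2 : ℝ) ^ (n + 1))

def zeta (n : ℕ) : ℂ := Complex.exp (theta n * Complex.I)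

def uP (n : ℕ) (z : ℂ) : ℝ := ((zeta n + z) / (zeta n - z)).re

/-- The Poisson kernel of the unit disk with pole `e^{it}`. -/
def poissonKernelDisk (t : ℝ) (z : ℂ) : ℝ :=
  (1 - ‖z‖ ^ 2) / ‖Complex.exp (t * Complex.I) - z‖ ^ 2

open Topology

section PoissonKernel

variable {c w z ζ : ℂ} {R : ℝ}

lemma poissonKernel_nonneg (h : ‖w - c‖ ≤ ‖z - c‖) : 0 ≤ poissonKernel c w z :=
  div_nonneg (sub_nonneg.2 (pow_le_pow_left₀ (norm_nonneg _) h 2)) (sq_nonneg _)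

lemma sub_norm_mul_poissonKernel_le (hz : z ∈ Metric.sphere c R) (hw : w ∈ Metric.ball c R) :
    (R - ‖w - c‖) * poissonKernel c w z ≤ R + ‖w - c‖ := by
  have hpos : 0 < R - ‖w - c‖ := sub_pos.2 (mem_ball_iff_norm.1 hw)
  have hk : poissonKernel c w z = ((z - c + (w - c)) / ((z - c) - (w - c))).re := by
    rw [poissonKernel_eq_re_herglotzRieszKernel]; rfl
  rw [hk, ← le_div_iff₀' hpos]
  exact re_herglotzRieszKernel_le hz hw

lemma norm_ofReal_mul (hζ : ‖ζ‖ = 1) (r : ℝ) : ‖(r : ℂ) * ζ‖ = |r| := by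
  rw [norm_mul, hζ, mul_one, norm_real, Real.norm_eq_abs]

lemma poissonKernel_ofReal_mul_self (hζ : ‖ζ‖ = 1) (r : ℝ) :
    poissonKernel 0 (r * ζ) ζ = (1 + r) / (1 - r) := by
  have hsub : ζ - r * ζ = ((1 - r : ℝ) : ℂ) * ζ := by push_cast; ring
  simp only [poissonKernel_def, sub_zero]
  rw [hsub, norm_ofReal_mul hζ, norm_ofReal_mul hζ, hζ, sq_abs, sq_abs]
  rcases eq_or_ne r 1 with rfl | hr
  · simp
  · have : (1 : ℝ) - r ≠ 0 := sub_ne_zero.2 (Ne.symm hr)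
    field_simp
    ring

lemma abs_one_sub_mul_poissonKernel_le (hζ : ‖ζ‖ = 1) (hz : ‖z‖ = 1) {r : ℝ}
    (hr : r ∈ Ico 0 1) : |(1 - r) * poissonKernel 0 (r * ζ) z| ≤ 2 := by
  have hnorm : ‖(r : ℂ) * ζ - 0‖ = r := by rw [sub_zero, norm_ofReal_mul hζ, abs_of_nonneg hr.1]
  have hzs : z ∈ Metric.sphere 0 1 := by simpa using hz
  have hwb : (r : ℂ) * ζ ∈ Metric.ball 0 1 := by rw [mem_ball_iff_norm, hnorm]; exact hr.2
  have hle := sub_norm_mul_poissonKernel_le hzs hwb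
  have hnn : 0 ≤ poissonKernel 0 (r * ζ) z :=
    poissonKernel_nonneg (by rw [hnorm, sub_zero, hz]; exact hr.2.le)
  rw [hnorm] at hle
  rw [abs_of_nonneg (mul_nonneg (sub_nonneg.2 hr.2.le) hnn)]
  linarith [hr.2]

lemma tendsto_one_sub_mul_poissonKernel_self (hζ : ‖ζ‖ = 1) :
    Tendsto (fun r : ℝ => (1 - r) * poissonKernel 0 (r * ζ) ζ) (𝓝[<] 1) (𝓝 2) := by
  have h : Tendsto (fun r : ℝ => 1 + r) (𝓝[<] 1) (𝓝 2) :=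
    ((continuous_const.add continuous_id).tendsto' 1 2 one_add_one_eq_two).mono_left
      nhdsWithin_le_nhds
  refine h.congr' ?_
  filter_upwards [self_mem_nhdsWithin] with r (hr : r < 1)
  rw [poissonKernel_ofReal_mul_self hζ, mul_div_cancel₀ _ (sub_ne_zero.2 hr.ne')]

lemma tendsto_one_sub_mul_poissonKernel_of_ne (h : ζ ≠ z) :
    Tendsto (fun r : ℝ => (1 - r) * poissonKernel 0 (r * ζ) z) (𝓝 1) (𝓝 0) := by
  have hcont : ContinuousAt (fun r : ℝ => (1 - r) * poissonKernel 0 (r * ζ) z) 1 := by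
    simp only [poissonKernel_def]
    have : ‖z - 0 - ((1 : ℝ) * ζ - 0)‖ ^ 2 ≠ 0 := by simpa [sub_eq_zero] using h.symm
    fun_prop (disch := exact this)
  simpa using hcont.tendsto

end PoissonKernel

theorem tendsto_one_sub_mul_tsum_poissonKernel {ζ : ℕ → ℂ} (hζ : ∀ m, ‖ζ m‖ = 1)
    (hinj : Function.Injective ζ) {γ : ℕ → ℝ} (hγ : Summable fun m => |γ m|) (n : ℕ) :
    Tendsto (fun r : ℝ => (1 - r) * ∑' m, γ m * poissonKernel 0 (r * ζ n) (ζ m))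
      (𝓝[<] 1) (𝓝 (2 * γ n)) := by
  have hlim (m : ℕ) : Tendsto (fun r : ℝ => γ m * ((1 - r) * poissonKernel 0 (r * ζ n) (ζ m)))
      (𝓝[<] 1) (𝓝 (if m = n then 2 * γ n else 0)) := by
    split_ifs with hmn
    · subst hmn
      simpa [mul_comm] using (tendsto_one_sub_mul_poissonKernel_self (hζ m)).const_mul (γ m)
    · simpa using ((tendsto_one_sub_mul_poissonKernel_of_ne
        (hinj.ne (Ne.symm hmn))).mono_left nhdsWithin_le_nhds).const_mul (γ m)
  have hbound : ∀ᶠ r : ℝ in 𝓝[<] 1,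
      ∀ m, ‖γ m * ((1 - r) * poissonKernel 0 (r * ζ n) (ζ m))‖ ≤ 2 * |γ m| := by
    filter_upwards [Ico_mem_nhdsLT one_pos] with r hr m
    rw [Real.norm_eq_abs, abs_mul, mul_comm 2]
    exact mul_le_mul_of_nonneg_left
      (abs_one_sub_mul_poissonKernel_le (hζ n) (hζ m) hr) (abs_nonneg _)
  have h := tendsto_tsum_of_dominated_convergence (hγ.mul_left 2) hlim hbound
  rw [tsum_ite_eq] at h
  refine h.congr fun r => ?_
  simp only [← tsum_mul_left, mul_left_comm (1 - r)]

theorem tendsto_one_sub_mul_integral_poissonKernel {α : Type*} [MeasurableSpace α]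
    {μ : Measure α} {e : α → ℂ} (he : Measurable e) (he1 : ∀ t, ‖e t‖ = 1) {f : α → ℝ}
    (hf : Integrable f μ) {ζ : ℂ} (hζ : ‖ζ‖ = 1) (hae : ∀ᵐ t ∂μ, e t ≠ ζ) :
    Tendsto (fun r : ℝ => (1 - r) * ∫ t, poissonKernel 0 (r * ζ) (e t) * f t ∂μ)
      (𝓝[<] 1) (𝓝 0) := by
  have hmeas (r : ℝ) : AEStronglyMeasurable
      (fun t => (1 - r) * poissonKernel 0 (r * ζ) (e t) * f t) μ := by
    have : Measurable fun t => (1 - r) * poissonKernel 0 (r * ζ) (e t) := by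
      simp only [poissonKernel_def]; fun_prop
    exact this.aestronglyMeasurable.mul hf.1
  have hbound : ∀ᶠ r : ℝ in 𝓝[<] 1,
      ∀ᵐ t ∂μ, ‖(1 - r) * poissonKernel 0 (r * ζ) (e t) * f t‖ ≤ 2 * ‖f t‖ := by
    filter_upwards [Ico_mem_nhdsLT one_pos] with r hr
    refine ae_of_all _ fun t => ?_
    rw [norm_mul]
    exact mul_le_mul_of_nonneg_right
      (abs_one_sub_mul_poissonKernel_le hζ (he1 t) hr) (norm_nonneg _)
  have hlim : ∀ᵐ t ∂μ, Tendsto (fun r : ℝ => (1 - r) * poissonKernel 0 (r * ζ) (e t) * f t)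
      (𝓝[<] 1) (𝓝 0) := by
    filter_upwards [hae] with t ht
    simpa using ((tendsto_one_sub_mul_poissonKernel_of_ne (Ne.symm ht)).mono_left
      nhdsWithin_le_nhds).mul_const (f t)
  simpa only [integral_const_mul, mul_assoc, integral_zero] using
    tendsto_integral_filter_of_dominated_convergence _ (.of_forall hmeas) hbound
      (hf.norm.const_mul 2) hlim

lemma countable_setOf_exp_mul_I_eq (θ : ℝ) :
    {t : ℝ | exp (t * I) = exp (θ * I)}.Countable := by
  refine (countable_range fun k : ℤ => θ + k * (2 * Real.pi)).mono fun t ht => ?_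
  obtain ⟨k, hk⟩ := exp_eq_exp_iff_exists_int.1 ht
  exact ⟨k, by simpa using (congrArg im hk).symm⟩

lemma theta_mem_Ioo (n : ℕ) : theta n ∈ Ioo 0 Real.pi := by
  have h0 : (0 : ℝ) < (1 / 2) ^ (n + 1) := by positivity
  have h1 : (1 / 2 : ℝ) ^ (n + 1) < 1 := pow_lt_one₀ (by norm_num) (by norm_num) n.succ_ne_zero
  unfold theta
  constructor <;> nlinarith [Real.pi_pos]

lemma theta_strictMono : StrictMono theta := fun m n hmn => by
  have h : (1 / 2 : ℝ) ^ (n + 1) < (1 / 2) ^ (m + 1) :=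
    pow_lt_pow_right_of_lt_one₀ (by norm_num) (by norm_num) (by omega)
  unfold theta; nlinarith [Real.pi_pos]

lemma norm_zeta (n : ℕ) : ‖zeta n‖ = 1 := norm_exp_ofReal_mul_I _

lemma arg_zeta (n : ℕ) : arg (zeta n) = theta n := by
  obtain ⟨h0, hπ⟩ := theta_mem_Ioo n
  rw [zeta, arg_exp_mul_I, toIocMod_eq_self]
  constructor <;> linarith

lemma zeta_injective : Function.Injective zeta := fun m n h =>
  theta_strictMono.injective (by rw [← arg_zeta, h, arg_zeta])

lemma uP_eq_poissonKernel (n : ℕ) (z : ℂ) : uP n z = poissonKernel 0 z (zeta n) := by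
  rw [poissonKernel_eq_re_herglotzRieszKernel, Function.comp_apply, herglotzRieszKernel_def]
  simp only [uP, sub_zero]

lemma poissonKernelDisk_eq_poissonKernel (t : ℝ) (z : ℂ) :
    poissonKernelDisk t z = poissonKernel 0 z (exp (t * I)) := by
  simp only [poissonKernelDisk, poissonKernel_def, sub_zero, norm_exp_ofReal_mul_I, one_pow]

/-- For `γ ∈ ℓ¹`, `γ ≠ 0`, the function `u = Σ γₙ uₙ` is not the Poisson integral of any
integrable boundary function `f ∈ L¹[0, 2π)`. -/
theorem sum_not_poisson_integral (γ : ℕ → ℝ) (hγ : Summable fun n : ℕ => |γ n|)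
    (hγ0 : γ ≠ 0) (u : ℂ → ℝ) (hu : u = fun z : ℂ => ∑' n : ℕ, γ n * uP n z) :
    ¬ ∃ f : ℝ → ℝ, IntegrableOn f (Set.Ico (0 : ℝ) (2 * Real.pi)) volume ∧
      ∀ z : ℂ, ‖z‖ < 1 →
        u z = (1 / (2 * Real.pi)) *
          ∫ t in Set.Ico (0 : ℝ) (2 * Real.pi), poissonKernelDisk t z * f t := by
  rintro ⟨f, hf, hrep⟩
  refine hγ0 (funext fun n => ?_)
  have hseries : Tendsto (fun r : ℝ => (1 - r) * u (r * zeta n)) (𝓝[<] 1) (𝓝 (2 * γ n)) := by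
    simpa only [hu, uP_eq_poissonKernel] using
      tendsto_one_sub_mul_tsum_poissonKernel norm_zeta zeta_injective hγ n
  have hintegral : Tendsto (fun r : ℝ => (1 - r) * u (r * zeta n)) (𝓝[<] 1) (𝓝 0) := by
    have h := (tendsto_one_sub_mul_integral_poissonKernel (by fun_prop) norm_exp_ofReal_mul_I
      hf (norm_zeta n) (ae_restrict_of_ae
        ((countable_setOf_exp_mul_I_eq (theta n)).ae_notMem volume))).const_mul
      (1 / (2 * Real.pi))
    rw [mul_zero] at h
    refine h.congr' ?_
    filter_upwards [Ioo_mem_nhdsLT one_pos] with r hr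
    have hr1 : ‖(r : ℂ) * zeta n‖ < 1 := by
      rw [norm_ofReal_mul (norm_zeta n), abs_of_pos hr.1]; exact hr.2
    simp only [hrep _ hr1, poissonKernelDisk_eq_poissonKernel]
    ring
  simpa using tendsto_nhds_unique hseries hintegral

end
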